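/- For every natural number N ≥ 1, the quantity k(√(N+2)) = N·(∫₀^{√(N+2)} e^{-s²/2} s^{N-1} ds)/(∫₀^{√(N+2)} e^{-s²/2} s^{N+1} ds) satisfies k(√(N+2)) < 2. -/

import Mathlib

/-!
Write `I m = ∫₀ᴿ e^{-s²/2} sᵐ ds`. Integrating `d/ds (-s^{m+1} e^{-s²/2})` gives
`I (m + 2) = (m + 1) I m - R^{m+1} e^{-R²/2}`, so with `m = N - 1` the claim
`N I (N - 1) < 2 I (N + 1)` becomes `R^N e^{-R²/2} < I (N + 1)`. For `R² = N + 2` the left side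
equals `∫₀ᴿ e^{-R²/2} s^{N+1} ds`, which is smaller than `I (N + 1)` because
`e^{-s²/2} > e^{-R²/2}` on `[0, R)`.
-/

open Real MeasureTheory

noncomputable def gaussianMoment (m : ℕ) (R : ℝ) : ℝ :=
  ∫ s in (0 : ℝ)..R, exp (-s ^ 2 / 2) * s ^ m

theorem hasDerivAt_exp_neg_sq_div_two (s : ℝ) :
    HasDerivAt (fun s : ℝ => exp (-s ^ 2 / 2)) (exp (-s ^ 2 / 2) * (-s)) s := by
  have h : HasDerivAt (fun s : ℝ => -s ^ 2 / 2) (-s) s :=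
    ((hasDerivAt_pow 2 s).neg.div_const 2).congr_deriv (by push_cast; ring)
  exact h.exp

theorem hasDerivAt_neg_pow_mul_exp_neg_sq_div_two (m : ℕ) (s : ℝ) :
    HasDerivAt (fun s : ℝ => -(s ^ (m + 1) * exp (-s ^ 2 / 2)))
      (exp (-s ^ 2 / 2) * s ^ (m + 2) - (m + 1) * (exp (-s ^ 2 / 2) * s ^ m)) s :=
  ((hasDerivAt_pow (m + 1) s).mul (hasDerivAt_exp_neg_sq_div_two s)).neg.congr_deriv
    (by push_cast; ring)

theorem continuous_exp_neg_sq_div_two_mul_pow (m : ℕ) :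
    Continuous fun s : ℝ => exp (-s ^ 2 / 2) * s ^ m := by
  fun_prop

theorem gaussianMoment_add_two (m : ℕ) (R : ℝ) :
    gaussianMoment (m + 2) R = (m + 1) * gaussianMoment m R - R ^ (m + 1) * exp (-R ^ 2 / 2) := by
  have hint (k : ℕ) : IntervalIntegrable (fun s : ℝ => exp (-s ^ 2 / 2) * s ^ k) volume 0 R :=
    (continuous_exp_neg_sq_div_two_mul_pow k).intervalIntegrable 0 R
  have hFTC := intervalIntegral.integral_eq_sub_of_hasDerivAt
    (fun s _ => hasDerivAt_neg_pow_mul_exp_neg_sq_div_two m s)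
    ((hint (m + 2)).sub ((hint m).const_mul ((m : ℝ) + 1)))
  rw [intervalIntegral.integral_sub (hint (m + 2)) ((hint m).const_mul _),
    intervalIntegral.integral_const_mul] at hFTC
  simp only [ne_eq, Nat.add_eq_zero_iff, one_ne_zero, and_false, not_false_eq_true, zero_pow,
    zero_mul, neg_zero, sub_zero] at hFTC
  unfold gaussianMoment
  linarith

theorem pow_succ_mul_exp_lt_gaussianMoment (m : ℕ) {R : ℝ} (hR : 0 < R) :
    R ^ (m + 1) / (m + 1) * exp (-R ^ 2 / 2) < gaussianMoment m R := by
  have hconst : ∫ s in (0 : ℝ)..R, exp (-R ^ 2 / 2) * s ^ m =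
      R ^ (m + 1) / (m + 1) * exp (-R ^ 2 / 2) := by
    rw [intervalIntegral.integral_const_mul, integral_pow]
    simp only [ne_eq, Nat.add_eq_zero_iff, one_ne_zero, and_false, not_false_eq_true, zero_pow,
      sub_zero]
    ring
  have hexp_lt {s : ℝ} (hs0 : 0 ≤ s) (hsR : s < R) : exp (-R ^ 2 / 2) < exp (-s ^ 2 / 2) :=
    exp_lt_exp.2 (by nlinarith)
  rw [← hconst]
  refine intervalIntegral.integral_lt_integral_of_continuousOn_of_le_of_exists_lt hR
    (by fun_prop) (continuous_exp_neg_sq_div_two_mul_pow m).continuousOn ?_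
    ⟨R / 2, ⟨by positivity, by linarith⟩, ?_⟩
  · rintro s ⟨hs0, hsR⟩
    rcases hsR.lt_or_eq with hsR | rfl
    · exact mul_le_mul_of_nonneg_right (hexp_lt hs0.le hsR).le (by positivity)
    · rfl
  · exact mul_lt_mul_of_pos_right (hexp_lt (by positivity) (by linarith)) (by positivity)

theorem k_sqrt_add_two_lt_two (N : ℕ) (hN : 1 ≤ N) :
    (N : ℝ) * (∫ s in (0:ℝ)..Real.sqrt ((N : ℝ) + 2), Real.exp (-s ^ 2 / 2) * s ^ (N - 1)) /
        (∫ s in (0:ℝ)..Real.sqrt ((N : ℝ) + 2), Real.exp (-s ^ 2 / 2) * s ^ (N + 1)) < 2 := by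
  obtain ⟨n, rfl⟩ : ∃ n, N = n + 1 := ⟨N - 1, (Nat.succ_pred_eq_of_pos hN).symm⟩
  set R := √((↑(n + 1) : ℝ) + 2)
  change (↑(n + 1) : ℝ) * gaussianMoment n R / gaussianMoment (n + 2) R < 2
  have hR : 0 < R := sqrt_pos.2 (by positivity)
  have hR2 : R ^ 2 = n + 3 := by
    rw [sq_sqrt (by positivity)]; push_cast; ring
  have hrec := gaussianMoment_add_two n R
  have hpow : R ^ (n + 2 + 1) / ((↑(n + 2) : ℝ) + 1) = R ^ (n + 1) := by
    rw [pow_add R (n + 1) 2, hR2]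
    push_cast
    field_simp
    ring
  have hlower : R ^ (n + 1) * exp (-R ^ 2 / 2) < gaussianMoment (n + 2) R :=
    hpow ▸ pow_succ_mul_exp_lt_gaussianMoment (n + 2) hR
  have hpos : 0 < gaussianMoment (n + 2) R := lt_trans (by positivity) hlower
  rw [div_lt_iff₀ hpos]
  push_cast
  linarith
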